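/- arXiv:1302.5729 — 2 statements merged into one kernel-verified Lean document; each statement's English description precedes it below -/
import Mathlib

section
/- Let λ > 0 and 0 < a ≤ 1/λ. Then for every y ∈ ℝ the function F(x) = ½(y − x)² + λ·φ_atan(x; a), where φ_atan(x; a) = (2/(a√3))·(arctan((1 + 2a|x|)/√3) − π/6), is strictly convex on ℝ. -/
/-!
Up to an affine function of `x`, `F(x) = G(|x|)` with `G(t) = t²/2 + λ·φ(t)`, where `φ` is the
penalty profile without the absolute value. For `t > 0`, `G'(t) = t + 4λ/(3 + u²) > 0` and
`G''(t) = 1 - 16λa·u/(3 + u²)²` with `u = 1 + 2at > 1`; since `λa ≤ 1` and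
`(3 + u²)² - 16u = (u - 1)²(u² + 2u + 9)`, `G` is strictly increasing and strictly convex on
`[0, ∞)`. Composing such a function with the norm of a strictly convex space gives a strictly
convex function.
-/

open Real Set

theorem StrictConvexOn.comp_norm {E : Type*} [NormedAddCommGroup E] [NormedSpace ℝ E]
    [StrictConvexSpace ℝ E] {g : ℝ → ℝ} (hg : StrictConvexOn ℝ (Ici 0) g)
    (hg_mono : StrictMonoOn g (Ici 0)) :
    StrictConvexOn ℝ univ (fun x : E => g ‖x‖) := by
  refine ⟨convex_univ, fun x _ z _ hxz p q hp hq hpq => ?_⟩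
  by_cases hnorm : ‖x‖ = ‖z‖
  · have hlt : ‖p • x + q • z‖ < ‖z‖ := norm_combo_lt_of_ne hnorm.le le_rfl hxz hp hq hpq
    calc g ‖p • x + q • z‖ < g ‖z‖ := hg_mono (norm_nonneg _) (norm_nonneg _) hlt
      _ = p • g ‖x‖ + q • g ‖z‖ := by rw [hnorm, ← add_smul, hpq, one_smul]
  · have htri : ‖p • x + q • z‖ ≤ p * ‖x‖ + q * ‖z‖ := by
      simpa only [norm_smul, Real.norm_of_nonneg hp.le, Real.norm_of_nonneg hq.le]
        using norm_add_le (p • x) (q • z)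
    calc g ‖p • x + q • z‖ ≤ g (p * ‖x‖ + q * ‖z‖) :=
          hg_mono.monotoneOn (norm_nonneg _) ((norm_nonneg _).trans htri) htri
      _ < p • g ‖x‖ + q • g ‖z‖ :=
          hg.2 (norm_nonneg x) (norm_nonneg z) hnorm hp hq hpq

/-- `φ_atan(t; a)` for `t ≥ 0`, i.e. without the `|·|`. -/
noncomputable def atanPenaltyProfile (a t : ℝ) : ℝ :=
  2 / (a * √3) * (arctan ((1 + 2 * a * t) / √3) - π / 6)

/-- `F` at `y = 0`, as a function of `|x|`. -/
noncomputable def radialCost (lam a t : ℝ) : ℝ :=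
  t ^ 2 / 2 + lam * atanPenaltyProfile a t

theorem hasDerivAt_atanPenaltyProfile {a : ℝ} (ha : a ≠ 0) (t : ℝ) :
    HasDerivAt (atanPenaltyProfile a) (4 / (3 + (1 + 2 * a * t) ^ 2)) t := by
  have hu : HasDerivAt (fun t => (1 + 2 * a * t) / √3) (2 * a / √3) t := by
    simpa using (((hasDerivAt_id t).const_mul (2 * a)).const_add 1).div_const √3
  refine ((((hasDerivAt_arctan _).comp t hu).sub_const (π / 6)).const_mul
    (2 / (a * √3))).congr_deriv ?_
  have hs3 : √3 ^ 2 = 3 := sq_sqrt (by norm_num)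
  field_simp
  rw [hs3]
  ring

theorem deriv_radialCost {lam a : ℝ} (ha : a ≠ 0) :
    deriv (radialCost lam a) = fun t => t + 4 * lam / (3 + (1 + 2 * a * t) ^ 2) := by
  funext t
  refine HasDerivAt.deriv <| (((hasDerivAt_pow 2 t).div_const 2).add
    ((hasDerivAt_atanPenaltyProfile ha t).const_mul lam)).congr_deriv ?_
  ring

theorem hasDerivAt_deriv_radialCost (lam a t : ℝ) :
    HasDerivAt (fun t => t + 4 * lam / (3 + (1 + 2 * a * t) ^ 2))
      (1 - 16 * lam * a * (1 + 2 * a * t) / (3 + (1 + 2 * a * t) ^ 2) ^ 2) t := by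
  have hw : HasDerivAt (fun t => 3 + (1 + 2 * a * t) ^ 2) (2 * (1 + 2 * a * t) * (2 * a)) t := by
    simpa using ((((hasDerivAt_id t).const_mul (2 * a)).const_add 1).pow 2).const_add 3
  refine ((hasDerivAt_id t).add
    ((hasDerivAt_const t (4 * lam)).div hw (by positivity))).congr_deriv ?_
  field_simp
  ring

theorem continuous_radialCost (lam a : ℝ) : Continuous (radialCost lam a) := by
  unfold radialCost atanPenaltyProfile
  fun_prop

theorem sixteen_mul_lt_sq_three_add_sq {u : ℝ} (hu : 1 < u) : 16 * u < (3 + u ^ 2) ^ 2 := by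
  have hfactor : (3 + u ^ 2) ^ 2 - 16 * u = (u - 1) ^ 2 * (u ^ 2 + 2 * u + 9) := by ring
  have hu' : 0 < u - 1 := sub_pos.2 hu
  have hpos : 0 < (u - 1) ^ 2 * (u ^ 2 + 2 * u + 9) := by positivity
  linarith

theorem strictMonoOn_radialCost {lam a : ℝ} (hlam : 0 ≤ lam) (ha : a ≠ 0) :
    StrictMonoOn (radialCost lam a) (Ici 0) := by
  refine strictMonoOn_of_deriv_pos (convex_Ici 0) (continuous_radialCost lam a).continuousOn ?_
  intro t ht
  rw [interior_Ici, mem_Ioi] at ht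
  rw [deriv_radialCost ha]
  positivity

theorem strictConvexOn_radialCost {lam a : ℝ} (ha : 0 < a) (hla : lam * a ≤ 1) :
    StrictConvexOn ℝ (Ici 0) (radialCost lam a) := by
  refine strictConvexOn_of_deriv2_pos (convex_Ici 0) (continuous_radialCost lam a).continuousOn ?_
  intro t ht
  rw [interior_Ici, mem_Ioi] at ht
  rw [Function.iterate_succ_apply, Function.iterate_one, deriv_radialCost ha.ne',
    (hasDerivAt_deriv_radialCost lam a t).deriv, sub_pos, div_lt_one (by positivity)]
  have hu : 1 < 1 + 2 * a * t := lt_add_of_pos_right 1 (by positivity)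
  calc 16 * lam * a * (1 + 2 * a * t) ≤ 16 * (1 + 2 * a * t) := by nlinarith
    _ < (3 + (1 + 2 * a * t) ^ 2) ^ 2 := sixteen_mul_lt_sq_three_add_sq hu

/-- For `λ > 0` and `0 < a ≤ 1/λ`, the scalar cost
`F(x) = ½(y−x)² + λ·φ_atan(x; a)` with
`φ_atan(x; a) = (2/(a√3))·(arctan((1 + 2a|x|)/√3) − π/6)`
is strictly convex for every `y`. -/
theorem strictConvex_scalar_atan_penalty
    (lam a : ℝ) (hlam : 0 < lam) (ha : 0 < a) (ha' : a ≤ 1 / lam) (y : ℝ) :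
    StrictConvexOn ℝ Set.univ
      (fun x : ℝ => (1/2) * (y - x)^2
        + lam * ((2 / (a * Real.sqrt 3)) *
            (Real.arctan ((1 + 2 * a * |x|) / Real.sqrt 3) - Real.pi / 6))) := by
  have hla : lam * a ≤ 1 := by rwa [le_div_iff₀' hlam] at ha'
  have hradial : StrictConvexOn ℝ univ (fun x : ℝ => radialCost lam a ‖x‖) :=
    (strictConvexOn_radialCost ha hla).comp_norm (strictMonoOn_radialCost hlam.le ha.ne')
  have hlinear : ConvexOn ℝ univ (fun x : ℝ => -y * x) :=
    (LinearMap.mul ℝ ℝ (-y)).convexOn convex_univ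
  refine ((hradial.add_convexOn hlinear).add_const (y ^ 2 / 2)).congr fun x _ => ?_
  simp only [Pi.add_apply, radialCost, atanPenaltyProfile, Real.norm_eq_abs, sq_abs]
  ring
end

section
/- Let λ > 0 and let φ : ℝ → ℝ be an even function that is differentiable on (0,∞) with φ'(0⁺) existing. Define f : (0,∞) → ℝ by f(x) = x + λφ'(x). If f is strictly increasing on (0,∞) and φ'(0⁺) ≥ 0, then for every y ∈ ℝ the function F(x) = ½(y − x)² + λφ(x) is strictly convex on ℝ. -/
/-!
Up to the affine function `x ↦ y²/2 - y x`, `F` is `ψ x = x²/2 + λ φ x`. On `(0, ∞)` we have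
`ψ' = f`, so `ψ` is strictly convex on `[0, ∞)`; its right derivative `λ d ≥ 0` at `0` then
makes it strictly increasing there. As `ψ` is even, `ψ x = ψ |x|`, and composing a strictly convex,
strictly increasing function on `[0, ∞)` with the convex function `|·|` is strictly convex.
-/

open Set

lemma StrictConvexOn.strictMonoOn_of_hasDerivWithinAt_Ioi_nonneg {S : Set ℝ} {f : ℝ → ℝ}
    {a f' : ℝ} (hf : StrictConvexOn ℝ S f) (ha : a ∈ S) (hf' : HasDerivWithinAt f f' (Ioi a) a)
    (h0 : 0 ≤ f') : StrictMonoOn f (S ∩ Ici a) := by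
  have hlt : ∀ y ∈ S, a < y → f a < f y := fun y hy hay => by
    have hslope := h0.trans_lt (hf.lt_slope_of_hasDerivWithinAt_Ioi ha hy hay hf')
    rwa [slope_def_field, div_pos_iff_of_pos_right (sub_pos.2 hay), sub_pos] at hslope
  rintro u ⟨huS, hau⟩ v ⟨hvS, -⟩ huv
  rcases (mem_Ici.1 hau).eq_or_lt with rfl | hau
  · exact hlt v hvS huv
  · exact hf.convexOn.strictMonoOn ha hau (hlt u huS hau) ⟨huS, mem_Ici.2 le_rfl⟩
      ⟨hvS, mem_Ici.2 huv.le⟩ huv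

lemma StrictConvexOn.comp_abs {f : ℝ → ℝ} (hf : StrictConvexOn ℝ (Ici 0) f)
    (hf' : StrictMonoOn f (Ici 0)) : StrictConvexOn ℝ univ (fun x => f |x|) := by
  refine ⟨convex_univ, fun x _ z _ hxz a b ha hb hab => ?_⟩
  simp only [smul_eq_mul]
  rcases eq_or_ne |x| |z| with habs | habs
  · have hzx : z = -x := (abs_eq_abs.1 habs.symm).resolve_left hxz.symm
    have hx : x ≠ 0 := by rintro rfl; simp [hzx] at hxz
    have hshort : |a * x + b * z| < |x| := by
      rw [hzx, show a * x + b * -x = (a - b) * x by ring, abs_mul]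
      exact mul_lt_of_lt_one_left (abs_pos.2 hx) (abs_sub_lt_iff.2 ⟨by linarith, by linarith⟩)
    calc f |a * x + b * z| < f |x| :=
          hf' (mem_Ici.2 (abs_nonneg _)) (mem_Ici.2 (abs_nonneg _)) hshort
      _ = a * f |x| + b * f |z| := by rw [← habs, ← add_mul, hab, one_mul]
  · have htri : |a * x + b * z| ≤ a * |x| + b * |z| := by
      simpa [abs_mul, abs_of_pos ha, abs_of_pos hb] using abs_add_le (a * x) (b * z)
    calc f |a * x + b * z| ≤ f (a * |x| + b * |z|) :=
          hf'.monotoneOn (mem_Ici.2 (abs_nonneg _)) (mem_Ici.2 (by positivity)) htri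
      _ < a * f |x| + b * f |z| := hf.2 (abs_nonneg x) (abs_nonneg z) habs ha hb hab

lemma StrictConvexOn.univ_of_even {f : ℝ → ℝ} {f' : ℝ} (heven : ∀ x, f (-x) = f x)
    (hf : StrictConvexOn ℝ (Ici 0) f) (hf' : HasDerivWithinAt f f' (Ioi 0) 0) (h0 : 0 ≤ f') :
    StrictConvexOn ℝ univ f := by
  have hmono : StrictMonoOn f (Ici 0) := by
    simpa using hf.strictMonoOn_of_hasDerivWithinAt_Ioi_nonneg self_mem_Ici hf' h0
  refine (hf.comp_abs hmono).congr fun x _ => ?_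
  rcases abs_choice x with h | h <;> simp [h, heven]

/-- If `φ` is even, differentiable on `(0,∞)` with derivative `φ'`, has right
derivative `φ'(0⁺) = d ≥ 0` at `0`, and `f(x) = x + λφ'(x)` is strictly
increasing on `(0,∞)`, then `F(x) = ½(y−x)² + λφ(x)` is strictly convex for
every `y`. -/
theorem strictConvex_of_strictMono_f
    (lam : ℝ) (hlam : 0 < lam)
    (φ φ' : ℝ → ℝ)
    (heven : ∀ x, φ (-x) = φ x)
    (hderiv : ∀ x ∈ Set.Ioi (0:ℝ), HasDerivAt φ (φ' x) x)
    (d : ℝ) (hd0 : HasDerivWithinAt φ d (Set.Ici 0) 0) (hdnonneg : 0 ≤ d)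
    (hmono : StrictMonoOn (fun x : ℝ => x + lam * φ' x) (Set.Ioi 0)) :
    ∀ y : ℝ, StrictConvexOn ℝ Set.univ
      (fun x : ℝ => (1/2) * (y - x)^2 + lam * φ x) := by
  intro y
  set ψ : ℝ → ℝ := fun x => x ^ 2 / 2 + lam * φ x
  have hψ' (x : ℝ) (hx : 0 < x) : HasDerivAt ψ (x + lam * φ' x) x :=
    (((hasDerivAt_pow 2 x).div_const 2).add ((hderiv x hx).const_mul lam)).congr_deriv
      (by simp)
  have hψ0 : HasDerivWithinAt ψ (lam * d) (Ici 0) 0 :=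
    (((hasDerivAt_pow 2 (0 : ℝ)).div_const 2).hasDerivWithinAt.add
      (hd0.const_mul lam)).congr_deriv (by simp)
  have hcont : ContinuousOn ψ (Ici 0) := fun x hx =>
    (mem_Ici.1 hx).eq_or_lt.elim (fun h => h ▸ hψ0.continuousWithinAt)
      fun h => (hψ' x h).continuousAt.continuousWithinAt
  have hconvIci : StrictConvexOn ℝ (Ici 0) ψ :=
    StrictMonoOn.strictConvexOn_of_deriv (convex_Ici 0) hcont <| by
      rw [interior_Ici]
      exact hmono.congr fun x hx => ((hψ' x hx).deriv).symm
  have hconv : StrictConvexOn ℝ univ ψ :=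
    hconvIci.univ_of_even (fun x => by simp [ψ, heven]) (hψ0.mono Ioi_subset_Ici_self)
      (mul_nonneg hlam.le hdnonneg)
  have haffine : ConvexOn ℝ univ (LinearMap.mul ℝ ℝ (-y)) :=
    LinearMap.convexOn _ convex_univ
  refine (hconv.add_convexOn haffine).add_const (y ^ 2 / 2) |>.congr fun x _ => ?_
  simp only [ψ, Pi.add_apply, LinearMap.mul_apply']
  ring
end
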